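/- Let γ ≥ 1 and p > q ≥ γ. For any Π in the quasi-Trefftz space QT_p (of order p for a differential operator L of order γ with sufficiently smooth coefficients), the truncated Taylor polynomial T_q Π belongs to QT_q. (In contrast, QT_q is in general not a subspace of QT_p.) -/

import Mathlib

open MvPolynomial

/-- Partial derivative of a function of `d` real variables in the `g`-th direction. -/
noncomputable def pdFun {d : ℕ} (g : Fin d) (f : (Fin d → ℝ) → ℝ) : (Fin d → ℝ) → ℝ :=
  fun x => fderiv ℝ f x (Pi.single g 1)

/-- Iterated partial derivative `∂^i = ∂_{x_1}^{i_1} ⋯ ∂_{x_d}^{i_d}` of a function. -/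
noncomputable def pdMulti {d : ℕ} (i : Fin d →₀ ℕ) (f : (Fin d → ℝ) → ℝ) : (Fin d → ℝ) → ℝ :=
  ((List.ofFn fun g : Fin d => (pdFun g)^[i g]).foldr (· ∘ ·) id) f

/-- The finset of multi-indices of length `d` and total degree at most `k`. -/
noncomputable def degLE (d k : ℕ) : Finset (Fin d →₀ ℕ) :=
  (Finset.Iic (Finsupp.equivFunOnFinite.symm fun _ : Fin d => k)).filter fun j => (∑ g, j g) ≤ k

/-- The differential operator `L = ∑_{|j| ≤ γ} c_j(x) ∂^j` applied to `f`. -/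
noncomputable def applyL {d : ℕ} (γ : ℕ) (c : (Fin d →₀ ℕ) → (Fin d → ℝ) → ℝ)
    (f : (Fin d → ℝ) → ℝ) : (Fin d → ℝ) → ℝ :=
  fun x => ∑ j ∈ degLE d γ, c j x * pdMulti j f x

/-- The order-`k` Taylor polynomial of `f` at `x0`, as a function:
`∑_{|i| ≤ k} (1/i!) ∂^i f(x0) (x − x0)^i`. -/
noncomputable def taylorFun {d : ℕ} (x0 : Fin d → ℝ) (k : ℕ) (f : (Fin d → ℝ) → ℝ) :
    (Fin d → ℝ) → ℝ :=
  fun x => ∑ i ∈ degLE d k,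
    (pdMulti i f x0 / ∏ g, ((i g).factorial : ℝ)) * ∏ g, (x g - x0 g) ^ i g

/-! The difference `T_q Π - Π` has no terms of degree `≤ q` in its expansion around `x₀`, so
`L (T_q Π) - L Π = ∑_j c_j ∂^j (T_q Π - Π)` is a finite sum of products `a · S` with `a` of class
`C^(q-γ)` at `x₀` and `S` a polynomial vanishing to order `q - γ` at `x₀`. By the Leibniz rule such
sums are stable under a partial derivative, at the cost of one order in both factors, so all their
derivatives of order `≤ q - γ` vanish at `x₀`. Hence `T_{q-γ}[L (T_q Π)] = T_{q-γ}[L Π]`, which is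
zero because `q - γ ≤ p - γ`. -/

open Filter Topology

section IterateFoldr

variable {ι α β : Type*}

theorem rel_iterate {D : α → α} {D' : β → β} {R : ℕ → α → β → Prop}
    (hR : ∀ k a b, R (k + 1) a b → R k (D a) (D' b)) (n : ℕ) :
    ∀ k a b, R (k + n) a b → R k (D^[n] a) (D'^[n] b) := by
  induction n with
  | zero => exact fun k a b h => h
  | succ n ih => exact fun k a b h => ih k _ _ (hR _ a b (by rwa [← add_assoc] at h))

theorem rel_foldr_map_iterate {D : ι → α → α} {D' : ι → β → β} {R : ℕ → α → β → Prop}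
    (hR : ∀ g k a b, R (k + 1) a b → R k (D g a) (D' g b)) (n : ι → ℕ) (l : List ι) :
    ∀ k a b, R (k + (l.map n).sum) a b →
      R k ((l.map fun g => (D g)^[n g]).foldr (· ∘ ·) id a)
        ((l.map fun g => (D' g)^[n g]).foldr (· ∘ ·) id b) := by
  induction l with
  | nil => exact fun k a b h => h
  | cons g l ih =>
    intro k a b h
    refine rel_iterate (hR g) (n g) k _ _ (ih (k + n g) a b ?_)
    simpa [add_assoc, add_comm (n g)] using h

theorem rel_foldr_ofFn_iterate {d : ℕ} {D : Fin d → α → α} {D' : Fin d → β → β}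
    {R : ℕ → α → β → Prop} (hR : ∀ g k a b, R (k + 1) a b → R k (D g a) (D' g b))
    (n : Fin d → ℕ) {k : ℕ} {a : α} {b : β} (h : R (k + ∑ g, n g) a b) :
    R k ((List.ofFn fun g => (D g)^[n g]).foldr (· ∘ ·) id a)
      ((List.ofFn fun g => (D' g)^[n g]).foldr (· ∘ ·) id b) := by
  rw [List.ofFn_eq_map, List.ofFn_eq_map]
  exact rel_foldr_map_iterate hR n _ k a b (by rwa [← Fin.sum_univ_def])

end IterateFoldr

theorem mem_degLE {d k : ℕ} {i : Fin d →₀ ℕ} : i ∈ degLE d k ↔ i.degree ≤ k := by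
  rw [degLE, Finset.mem_filter, Finset.mem_Iic, ← Finsupp.degree_eq_sum]
  exact ⟨And.right, fun h => ⟨fun g => (Finsupp.le_degree g i).trans h, h⟩⟩

section Polynomial

variable {σ R : Type*} [CommSemiring R]

noncomputable def recenter (x0 : σ → R) : MvPolynomial σ R →ₐ[R] MvPolynomial σ R :=
  aeval fun g => X g + C (x0 g)

theorem eval_zero_recenter (x0 : σ → R) (Q : MvPolynomial σ R) :
    eval 0 (recenter x0 Q) = eval x0 Q := by
  induction Q using MvPolynomial.induction_on with
  | C a => simp [recenter]
  | add Q Q' hQ hQ' => simp only [map_add, hQ, hQ']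
  | mul_X Q g hQ => simp [recenter, ← hQ]

theorem pderiv_recenter (x0 : σ → R) (g : σ) (Q : MvPolynomial σ R) :
    pderiv g (recenter x0 Q) = recenter x0 (pderiv g Q) := by
  induction Q using MvPolynomial.induction_on with
  | C a => simp [recenter]
  | add Q Q' hQ hQ' => simp only [map_add, hQ, hQ']
  | mul_X Q h hQ =>
    simp only [recenter, map_mul, aeval_X, pderiv_mul, map_add] at hQ ⊢
    rw [hQ]
    rcases eq_or_ne h g with rfl | hne
    · simp
    · simp [pderiv_X_of_ne hne]

theorem coeff_iterate_pderiv (g : σ) (n : ℕ) (m : σ →₀ ℕ) (Q : MvPolynomial σ R) :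
    coeff m ((pderiv g)^[n] Q) = (m g + n).descFactorial n * coeff (m + Finsupp.single g n) Q := by
  induction n generalizing Q with
  | zero => simp
  | succ n ih =>
    rw [Function.iterate_succ_apply, ih, coeff_pderiv, add_assoc, ← Finsupp.single_add,
      Finsupp.add_apply, Finsupp.single_eq_same, ← add_assoc, Nat.succ_descFactorial_succ]
    push_cast
    ring

theorem coeff_foldr_map_iterate_pderiv (n : σ → ℕ) (l : List σ) (hl : l.Nodup)
    (m : σ →₀ ℕ) (Q : MvPolynomial σ R) :
    coeff m ((l.map fun g => (pderiv g)^[n g]).foldr (· ∘ ·) id Q)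
      = (l.map fun g => ((m g + n g).descFactorial (n g) : R)).prod
        * coeff (m + (l.map fun g => Finsupp.single g (n g)).sum) Q := by
  induction l generalizing m with
  | nil => simp
  | cons g l ih =>
    obtain ⟨hg, hl⟩ := List.nodup_cons.mp hl
    have hm : (l.map fun g' => (((m + Finsupp.single g (n g)) g' + n g').descFactorial (n g') : R))
        = l.map fun g' => ((m g' + n g').descFactorial (n g') : R) :=
      List.map_congr_left fun g' hg' => by simp [ne_of_mem_of_not_mem hg' hg |>.symm]
    simp only [List.map_cons, List.foldr_cons, Function.comp_apply, List.prod_cons,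
      List.sum_cons, coeff_iterate_pderiv, ih hl, hm, add_assoc]
    ring

def VanishesTo (x0 : σ → R) (k : ℕ) (S : MvPolynomial σ R) : Prop :=
  ∀ i : σ →₀ ℕ, i.degree ≤ k → coeff i (recenter x0 S) = 0

theorem vanishesTo_zero (x0 : σ → R) (k : ℕ) : VanishesTo x0 k 0 := by
  simp [VanishesTo]

theorem VanishesTo.mono {x0 : σ → R} {k l : ℕ} {S : MvPolynomial σ R} (h : VanishesTo x0 l S)
    (hkl : k ≤ l) : VanishesTo x0 k S :=
  fun i hi => h i (hi.trans hkl)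

theorem VanishesTo.eval_eq_zero {x0 : σ → R} {k : ℕ} {S : MvPolynomial σ R}
    (h : VanishesTo x0 k S) : eval x0 S = 0 := by
  rw [← eval_zero_recenter, eval_zero, constantCoeff_eq]
  exact h 0 (by simp)

theorem VanishesTo.pderiv {x0 : σ → R} {k : ℕ} {S : MvPolynomial σ R}
    (h : VanishesTo x0 (k + 1) S) (g : σ) : VanishesTo x0 k (pderiv g S) := by
  intro i hi
  rw [← pderiv_recenter, coeff_pderiv, h _ (by rw [map_add, Finsupp.degree_single]; omega),
    zero_mul]

section FinDim

variable {d : ℕ}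

noncomputable def iteratedPderiv (i : Fin d →₀ ℕ) :
    MvPolynomial (Fin d) R → MvPolynomial (Fin d) R :=
  (List.ofFn fun g : Fin d => (pderiv g : MvPolynomial (Fin d) R → _)^[i g]).foldr (· ∘ ·) id

theorem coeff_zero_iteratedPderiv (i : Fin d →₀ ℕ) (Q : MvPolynomial (Fin d) R) :
    coeff 0 (iteratedPderiv i Q) = (∏ g, ((i g).factorial : R)) * coeff i Q := by
  rw [iteratedPderiv, List.ofFn_eq_map,
    coeff_foldr_map_iterate_pderiv _ _ (List.nodup_finRange d)]
  simp [Nat.descFactorial_self, ← Fin.prod_univ_def, ← Fin.sum_univ_def, Finsupp.univ_sum_single]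

theorem recenter_iteratedPderiv (x0 : Fin d → R) (i : Fin d →₀ ℕ) (Q : MvPolynomial (Fin d) R) :
    recenter x0 (iteratedPderiv i Q) = iteratedPderiv i (recenter x0 Q) :=
  (rel_foldr_ofFn_iterate (R := fun _ A B => B = recenter x0 A) (k := 0)
    (fun g _ _ _ h => by rw [h, pderiv_recenter]) i rfl).symm

theorem eval_iteratedPderiv (x0 : Fin d → R) (i : Fin d →₀ ℕ) (Q : MvPolynomial (Fin d) R) :
    eval x0 (iteratedPderiv i Q) = (∏ g, ((i g).factorial : R)) * coeff i (recenter x0 Q) := by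
  rw [← eval_zero_recenter, recenter_iteratedPderiv, eval_zero,
    constantCoeff_eq, coeff_zero_iteratedPderiv]

end FinDim

end Polynomial

section PartialDerivatives

variable {d : ℕ} {f h : (Fin d → ℝ) → ℝ} {x : Fin d → ℝ}

theorem contDiff_eval (S : MvPolynomial (Fin d) ℝ) {n : WithTop ℕ∞} :
    ContDiff ℝ n fun x : Fin d → ℝ => eval x S :=
  (AnalyticOnNhd.eval_mvPolynomial S).contDiff

theorem differentiableAt_eval (S : MvPolynomial (Fin d) ℝ) (x : Fin d → ℝ) :
    DifferentiableAt ℝ (fun x : Fin d → ℝ => eval x S) x :=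
  (contDiff_eval S (n := 1)).differentiable one_ne_zero x

theorem pdFun_add (g : Fin d) (hf : DifferentiableAt ℝ f x) (hh : DifferentiableAt ℝ h x) :
    pdFun g (f + h) x = pdFun g f x + pdFun g h x := by
  simp [pdFun, fderiv_add hf hh]

theorem pdFun_sub (g : Fin d) (hf : DifferentiableAt ℝ f x) (hh : DifferentiableAt ℝ h x) :
    pdFun g (f - h) x = pdFun g f x - pdFun g h x := by
  simp [pdFun, fderiv_sub hf hh]

theorem pdFun_const_smul (g : Fin d) (r : ℝ) (hf : DifferentiableAt ℝ f x) :
    pdFun g (r • f) x = r * pdFun g f x := by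
  simp [pdFun, fderiv_const_smul hf]

theorem pdFun_mul (g : Fin d) (hf : DifferentiableAt ℝ f x) (hh : DifferentiableAt ℝ h x) :
    pdFun g (fun y => f y * h y) x = pdFun g f x * h x + f x * pdFun g h x := by
  simp only [pdFun, fderiv_fun_mul hf hh, add_apply, smul_apply, smul_eq_mul]
  ring

theorem pdFun_eval (g : Fin d) (S : MvPolynomial (Fin d) ℝ) :
    pdFun g (fun x => eval x S) = fun x => eval x (pderiv g S) := by
  funext x
  induction S using MvPolynomial.induction_on with
  | C a => simp [pdFun]
  | add S S' hS hS' =>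
    simp only [map_add]
    exact (pdFun_add g (differentiableAt_eval S x) (differentiableAt_eval S' x)).trans
      (by rw [hS, hS'])
  | mul_X S n hS =>
    simp only [map_mul, eval_X, pderiv_mul, map_add]
    rw [pdFun_mul g (differentiableAt_eval S x) (differentiable_apply n x), hS]
    simp [pdFun, (hasFDerivAt_apply n x).fderiv, Pi.single_apply, pderiv_X, eq_comm]

theorem Filter.EventuallyEq.pdFun {f' : (Fin d → ℝ) → ℝ} (g : Fin d) (hf : f =ᶠ[𝓝 x] f') :
    _root_.pdFun g f =ᶠ[𝓝 x] _root_.pdFun g f' :=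
  (hf.fderiv (𝕜 := ℝ)).mono fun y hy => by simp [_root_.pdFun, hy]

theorem ContDiffAt.pdFun {k : ℕ} (g : Fin d) (hf : ContDiffAt ℝ (k + 1 : ℕ) f x) :
    ContDiffAt ℝ k (_root_.pdFun g f) x :=
  (hf.fderiv_right (by push_cast; rfl)).clm_apply contDiffAt_const

theorem ContDiffAt.eventually_differentiableAt {k : ℕ} (hf : ContDiffAt ℝ (k + 1 : ℕ) f x) :
    ∀ᶠ y in 𝓝 x, DifferentiableAt ℝ f y :=
  (hf.eventually (by simp)).mono fun _ hy => hy.differentiableAt (by simp)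

theorem pdMulti_eval (i : Fin d →₀ ℕ) (S : MvPolynomial (Fin d) ℝ) :
    pdMulti i (fun x => eval x S) = fun x => eval x (iteratedPderiv i S) :=
  rel_foldr_ofFn_iterate (R := fun _ Q F => F = fun x => eval x Q) (k := 0)
    (fun g _ _ _ h => by rw [h, pdFun_eval]) i rfl

end PartialDerivatives

section Flat

variable {d : ℕ} {x0 : Fin d → ℝ} {k : ℕ} {f a F G : (Fin d → ℝ) → ℝ}

-- Generators are taken up to equality near `x0`: the Leibniz rule for `a · S` only holds where
-- `a` is differentiable.
def flatSpan (x0 : Fin d → ℝ) (k : ℕ) : Submodule ℝ ((Fin d → ℝ) → ℝ) :=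
  Submodule.span ℝ {f | ∃ (a : (Fin d → ℝ) → ℝ) (S : MvPolynomial (Fin d) ℝ),
    ContDiffAt ℝ k a x0 ∧ VanishesTo x0 k S ∧ f =ᶠ[𝓝 x0] fun x => a x * eval x S}

theorem mem_flatSpan_of_eventuallyEq {S : MvPolynomial (Fin d) ℝ} (ha : ContDiffAt ℝ k a x0)
    (hS : VanishesTo x0 k S) (hf : f =ᶠ[𝓝 x0] fun x => a x * eval x S) : f ∈ flatSpan x0 k :=
  Submodule.subset_span ⟨a, S, ha, hS, hf⟩

theorem Filter.EventuallyEq.mem_flatSpan {φ : (Fin d → ℝ) → ℝ} (hf : f =ᶠ[𝓝 x0] φ)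
    (hφ : φ ∈ flatSpan x0 k) : f ∈ flatSpan x0 k := by
  have hdiff : f - φ ∈ flatSpan x0 k :=
    mem_flatSpan_of_eventuallyEq (a := 0) contDiffAt_const (vanishesTo_zero x0 k)
      (hf.mono fun x hx => by simp [hx])
  simpa using add_mem hdiff hφ

theorem flatSpan_antitone : Antitone (flatSpan x0) :=
  fun _ _ hkl => Submodule.span_mono fun _ ⟨a, S, ha, hS, hf⟩ =>
    ⟨a, S, ha.of_le (by exact_mod_cast hkl), hS.mono hkl, hf⟩

theorem mul_mem_flatSpan (ha : ContDiffAt ℝ k a x0) (hf : f ∈ flatSpan x0 k) :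
    (fun x => a x * f x) ∈ flatSpan x0 k := by
  have : flatSpan x0 k ≤ (flatSpan x0 k).comap (LinearMap.mulLeft ℝ a) :=
    Submodule.span_le.mpr fun _ ⟨b, S, hb, hS, hf⟩ =>
      mem_flatSpan_of_eventuallyEq (ha.mul hb) hS (hf.mono fun x hx => by simp [hx, mul_assoc])
  exact this hf

theorem apply_eq_zero_of_mem_flatSpan (hf : f ∈ flatSpan x0 k) : f x0 = 0 := by
  have : flatSpan x0 k ≤ LinearMap.ker (LinearMap.proj x0) :=
    Submodule.span_le.mpr fun _ ⟨_, _, _, hS, hf⟩ => by simp [hf.eq_of_nhds, hS.eval_eq_zero]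
  exact this hf

theorem eventually_differentiableAt_of_mem_flatSpan (hf : f ∈ flatSpan x0 (k + 1)) :
    ∀ᶠ x in 𝓝 x0, DifferentiableAt ℝ f x := by
  induction hf using Submodule.span_induction with
  | mem f hf =>
    obtain ⟨a, S, ha, -, hf⟩ := hf
    filter_upwards [ha.eventually_differentiableAt, hf.eventuallyEq_nhds] with x hx hfx
    exact (hx.mul (differentiableAt_eval S x)).congr_of_eventuallyEq hfx
  | zero => exact Eventually.of_forall fun _ => differentiableAt_const 0
  | add f h _ _ hf hh => filter_upwards [hf, hh] with x hfx hhx using hfx.add hhx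
  | smul r f _ hf => filter_upwards [hf] with x hx using hx.const_smul r

theorem pdFun_mem_flatSpan (g : Fin d) (hf : f ∈ flatSpan x0 (k + 1)) :
    pdFun g f ∈ flatSpan x0 k := by
  induction hf using Submodule.span_induction with
  | mem f hf =>
    obtain ⟨a, S, ha, hS, hf⟩ := hf
    have hprod : pdFun g (fun x => a x * eval x S) =ᶠ[𝓝 x0]
        (fun x => pdFun g a x * eval x S) + fun x => a x * eval x (pderiv g S) :=
      ha.eventually_differentiableAt.mono fun x hx => by
        rw [pdFun_mul g hx (differentiableAt_eval S x), pdFun_eval]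
        rfl
    exact ((hf.pdFun g).trans hprod).mem_flatSpan <| add_mem
      (mem_flatSpan_of_eventuallyEq (ha.pdFun g) (hS.mono k.le_succ) EventuallyEq.rfl)
      (mem_flatSpan_of_eventuallyEq (ha.of_le (by simp)) (hS.pderiv g) EventuallyEq.rfl)
  | zero =>
    convert zero_mem (flatSpan x0 k)
    funext x
    simp [pdFun]
  | add f h hf hh ihf ihh =>
    refine EventuallyEq.mem_flatSpan ?_ (add_mem ihf ihh)
    filter_upwards [eventually_differentiableAt_of_mem_flatSpan hf,
      eventually_differentiableAt_of_mem_flatSpan hh] with x hfx hhx using pdFun_add g hfx hhx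
  | smul r f hf ihf =>
    refine EventuallyEq.mem_flatSpan ?_ (Submodule.smul_mem _ r ihf)
    filter_upwards [eventually_differentiableAt_of_mem_flatSpan hf] with x hx
      using pdFun_const_smul g r hx

-- The smoothness of `G` is what lets partial derivatives distribute over `F - G`.
def EqUpToFlat (x0 : Fin d → ℝ) (k : ℕ) (F G : (Fin d → ℝ) → ℝ) : Prop :=
  ContDiffAt ℝ k G x0 ∧ F - G ∈ flatSpan x0 k

theorem eqUpToFlat_eval {S P : MvPolynomial (Fin d) ℝ} (h : VanishesTo x0 k (S - P)) :
    EqUpToFlat x0 k (fun x => eval x S) (fun x => eval x P) :=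
  ⟨(contDiff_eval P).contDiffAt, mem_flatSpan_of_eventuallyEq (a := fun _ => 1) contDiffAt_const h
    (Eventually.of_forall fun x => by simp)⟩

theorem EqUpToFlat.mono {l : ℕ} (h : EqUpToFlat x0 l F G) (hkl : k ≤ l) : EqUpToFlat x0 k F G :=
  ⟨h.1.of_le (by exact_mod_cast hkl), flatSpan_antitone hkl h.2⟩

theorem EqUpToFlat.pdFun (h : EqUpToFlat x0 (k + 1) F G) (g : Fin d) :
    EqUpToFlat x0 k (_root_.pdFun g F) (_root_.pdFun g G) := by
  obtain ⟨hG, hFG⟩ := h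
  refine ⟨hG.pdFun g, EventuallyEq.mem_flatSpan ?_ (pdFun_mem_flatSpan g hFG)⟩
  filter_upwards [hG.eventually_differentiableAt,
    eventually_differentiableAt_of_mem_flatSpan hFG] with x hGx hFGx
  have hFx : DifferentiableAt ℝ F x := by simpa using hFGx.add hGx
  exact (pdFun_sub g hFx hGx).symm

theorem EqUpToFlat.pdMulti {i : Fin d →₀ ℕ} (h : EqUpToFlat x0 (k + i.degree) F G) :
    EqUpToFlat x0 k (_root_.pdMulti i F) (_root_.pdMulti i G) :=
  rel_foldr_ofFn_iterate (R := EqUpToFlat x0) (fun g _ _ _ h => h.pdFun g) i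
    (by rwa [← Finsupp.degree_eq_sum])

theorem EqUpToFlat.pdMulti_apply_eq {i : Fin d →₀ ℕ} (h : EqUpToFlat x0 k F G)
    (hi : i.degree ≤ k) : _root_.pdMulti i F x0 = _root_.pdMulti i G x0 :=
  sub_eq_zero.mp <| apply_eq_zero_of_mem_flatSpan
    (EqUpToFlat.pdMulti (k := k - i.degree) (h.mono (by omega))).2

theorem EqUpToFlat.applyL {γ : ℕ} {c : (Fin d →₀ ℕ) → (Fin d → ℝ) → ℝ}
    (hc : ∀ j ∈ degLE d γ, ContDiffAt ℝ k (c j) x0) (h : EqUpToFlat x0 (k + γ) F G) :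
    EqUpToFlat x0 k (_root_.applyL γ c F) (_root_.applyL γ c G) := by
  have hj : ∀ j ∈ degLE d γ, EqUpToFlat x0 k (_root_.pdMulti j F) (_root_.pdMulti j G) :=
    fun j hj => (h.mono (by have := mem_degLE.mp hj; omega)).pdMulti
  refine ⟨ContDiffAt.sum fun j hj' => (hc j hj').mul (hj j hj').1, ?_⟩
  have hsum : _root_.applyL γ c F - _root_.applyL γ c G
      = ∑ j ∈ degLE d γ, fun x => c j x * (_root_.pdMulti j F - _root_.pdMulti j G) x := by
    ext x
    simp [_root_.applyL, mul_sub, Finset.sum_sub_distrib]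
  rw [hsum]
  exact Submodule.sum_mem _ fun j hj' => mul_mem_flatSpan (hc j hj') (hj j hj').2

end Flat

section Taylor

variable {d : ℕ} (x0 : Fin d → ℝ) (k : ℕ) (f : (Fin d → ℝ) → ℝ)

noncomputable def taylorPoly : MvPolynomial (Fin d) ℝ :=
  ∑ i ∈ degLE d k, C (pdMulti i f x0 / ∏ g, ((i g).factorial : ℝ)) * ∏ g, (X g - C (x0 g)) ^ i g

theorem eval_taylorPoly (x : Fin d → ℝ) : eval x (taylorPoly x0 k f) = taylorFun x0 k f x := by
  simp [taylorPoly, taylorFun]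

theorem recenter_taylorPoly : recenter x0 (taylorPoly x0 k f)
    = ∑ i ∈ degLE d k, monomial i (pdMulti i f x0 / ∏ g, ((i g).factorial : ℝ)) := by
  simp [taylorPoly, recenter, monomial_eq, Finsupp.prod_fintype]

variable {x0 k f}

theorem coeff_recenter_taylorPoly {i : Fin d →₀ ℕ} (hi : i ∈ degLE d k) :
    coeff i (recenter x0 (taylorPoly x0 k f)) = pdMulti i f x0 / ∏ g, ((i g).factorial : ℝ) := by
  simp [recenter_taylorPoly, coeff_sum, coeff_monomial, hi]

theorem taylorFun_eq_zero_iff : taylorFun x0 k f = 0 ↔ ∀ i ∈ degLE d k, pdMulti i f x0 = 0 := by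
  constructor
  · intro h i hi
    have hT : taylorPoly x0 k f = 0 := MvPolynomial.funext fun x => by simp [eval_taylorPoly, h]
    have hcoeff := coeff_recenter_taylorPoly (x0 := x0) (f := f) hi
    rw [hT, map_zero, coeff_zero, eq_comm, div_eq_zero_iff] at hcoeff
    exact hcoeff.resolve_right (by positivity)
  · intro h
    funext x
    exact Finset.sum_eq_zero fun i hi => by rw [h i hi, zero_div, zero_mul]

theorem vanishesTo_taylorPoly_sub (P : MvPolynomial (Fin d) ℝ) :
    VanishesTo x0 k (taylorPoly x0 k (fun x => eval x P) - P) := by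
  intro i hi
  rw [map_sub, coeff_sub, coeff_recenter_taylorPoly (mem_degLE.mpr hi), pdMulti_eval]
  dsimp only
  rw [eval_iteratedPderiv, mul_div_cancel_left₀ _ (by positivity), sub_self]

end Taylor

theorem stmt_15_general {d : ℕ} (x0 : Fin d → ℝ) (γ p q : ℕ) (hq : γ ≤ q) (hpq : q < p)
    (c : (Fin d →₀ ℕ) → (Fin d → ℝ) → ℝ)
    (hc : ∀ j ∈ degLE d γ, ContDiffAt ℝ (p - γ : ℕ) (c j) x0)
    (P : MvPolynomial (Fin d) ℝ)
    (hQT : taylorFun x0 (p - γ) (applyL γ c (fun x => eval x P)) = 0) :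
    taylorFun x0 (q - γ) (applyL γ c (taylorFun x0 q (fun x => eval x P))) = 0 := by
  have horder : q - γ ≤ p - γ := Nat.sub_le_sub_right hpq.le γ
  have hT : taylorFun x0 q (fun x => eval x P)
      = fun x => eval x (taylorPoly x0 q fun x => eval x P) :=
    funext fun x => (eval_taylorPoly x0 q _ x).symm
  have hL : EqUpToFlat x0 (q - γ) (applyL γ c (taylorFun x0 q fun x => eval x P))
      (applyL γ c fun x => eval x P) := by
    refine hT ▸ EqUpToFlat.applyL (fun j hj => (hc j hj).of_le (by exact_mod_cast horder)) ?_
    rw [Nat.sub_add_cancel hq]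
    exact eqUpToFlat_eval (vanishesTo_taylorPoly_sub P)
  rw [taylorFun_eq_zero_iff] at hQT ⊢
  intro i hi
  rw [hL.pdMulti_apply_eq (mem_degLE.mp hi)]
  exact hQT i (mem_degLE.mpr ((mem_degLE.mp hi).trans horder))

/-- If `Π ∈ QT_p` then `T_q Π ∈ QT_q`, for `p > q ≥ γ`. -/
theorem stmt_15 {d : ℕ} (x0 : Fin d → ℝ) (γ p q : ℕ) (hγ : 1 ≤ γ) (hq : γ ≤ q) (hpq : q < p)
    (c : (Fin d →₀ ℕ) → (Fin d → ℝ) → ℝ)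
    (hc : ∀ j ∈ degLE d γ, ContDiffAt ℝ (p - γ : ℕ) (c j) x0)
    (P : MvPolynomial (Fin d) ℝ) (hdeg : P.totalDegree ≤ p)
    (hQT : taylorFun x0 (p - γ) (applyL γ c (fun x => eval x P)) = 0) :
    taylorFun x0 (q - γ) (applyL γ c (taylorFun x0 q (fun x => eval x P))) = 0 :=
  stmt_15_general x0 γ p q hq hpq c hc P hQT
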